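/- Let A be a Schur ring over an abelian group G, m an integer coprime to |G|, and X a basic set of A. Then X^(m) = {x^m : x ∈ X} is also a basic set of A. -/

import Mathlib

open scoped Pointwise

noncomputable def clsum {G : Type*} [Group G] [Fintype G] (s : Set G) :
    MonoidAlgebra ℤ G :=
  ∑ x ∈ s.toFinite.toFinset, MonoidAlgebra.of ℤ G x

structure SchurRing (G : Type*) [Group G] [Fintype G] where
  P : Set (Set G)
  one_mem : ({(1 : G)} : Set G) ∈ P
  nonempty_cls : ∀ X ∈ P, X.Nonempty
  cover : ∀ g : G, ∃ X ∈ P, g ∈ X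
  disj : ∀ X ∈ P, ∀ Y ∈ P, X ≠ Y → Disjoint X Y
  inv_mem : ∀ X ∈ P, X⁻¹ ∈ P
  mul_closed : ∀ X ∈ P, ∀ Y ∈ P,
    clsum X * clsum Y ∈ Submodule.span ℤ (clsum '' P)

def SchurRing.isASet {G : Type*} [Group G] [Fintype G] (A : SchurRing G) (X : Set G) : Prop :=
  clsum X ∈ Submodule.span ℤ (clsum '' A.P)

/-!
For a prime `p ∤ |G|`, the Frobenius identity in `𝔽_p[G]` gives `(∑ X)^p = ∑ X^(p)`, using that
`x ↦ x^p` is injective. As `(∑ X)^p` lies in the Schur ring, its integer coefficients are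
constant on basic sets; reducing mod `p`, so are the `0`/`1` coefficients of `∑ X^(p)`, i.e.
`X^(p)` is a union of basic sets. Composing, the same holds for every `x ↦ x^k` with `k` coprime
to `|G|`. Finally `σ : x ↦ x^m` is a permutation of `G` whose inverse is a power of `σ`; if `σ`
and `σ⁻¹` both send basic sets to unions of basic sets, then `σ(X) ⊇ T` for a basic `T` and
`σ⁻¹(T) ⊇ X` force `σ(X) = T`.
-/

instance MonoidAlgebra.instCharP {R M : Type*} [Semiring R] [MulOneClass M] (p : ℕ) [CharP R p] :
    CharP (MonoidAlgebra R M) p :=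
  charP_of_injective_ringHom (f := MonoidAlgebra.singleOneRingHom)
    (fun _ _ h => MonoidAlgebra.single_right_inj.mp h) p

section clsum

variable {G : Type*} [Group G] [Fintype G]

open Classical in
theorem coeff_clsum (s : Set G) (g : G) : (clsum s).coeff g = if g ∈ s then 1 else 0 := by
  simp [clsum, MonoidAlgebra.coeff_sum, Finset.sum_apply', MonoidAlgebra.of_apply,
    MonoidAlgebra.coeff_single, Finsupp.single_apply]

theorem clsum_singleton_one : clsum ({1} : Set G) = 1 := by
  simp [clsum, MonoidAlgebra.one_def, ← Finset.singleton_one]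

theorem mapRingHom_clsum {R : Type*} [Semiring R] (f : ℤ →+* R) (s : Set G) :
    MonoidAlgebra.mapRingHom G f (clsum s) = ∑ x ∈ s.toFinite.toFinset, MonoidAlgebra.of R G x := by
  simp [clsum, MonoidAlgebra.of_apply]

end clsum

theorem intCast_coeff_clsum_pow_prime {G : Type*} [CommGroup G] [Fintype G] {p : ℕ} [Fact p.Prime]
    (hp : p.Coprime (Fintype.card G)) (X : Set G) (g : G) :
    (((clsum X ^ p).coeff g : ℤ) : ZMod p) = (clsum ((· ^ p) '' X)).coeff g := by
  classical
  have hinj : Function.Injective (· ^ p : G → G) :=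
    (powCoprime (by rwa [Nat.card_eq_fintype_card, Nat.coprime_comm])).injective
  have hfrob : MonoidAlgebra.mapRingHom G (Int.castRingHom (ZMod p)) (clsum X ^ p) =
      MonoidAlgebra.mapRingHom G (Int.castRingHom (ZMod p)) (clsum ((· ^ p) '' X)) := by
    rw [map_pow, mapRingHom_clsum, mapRingHom_clsum, sum_pow_char,
      Set.Finite.toFinset_image _ X.toFinite, Finset.sum_image hinj.injOn]
    simp only [map_pow]
  have := congrArg (·.coeff g) hfrob
  rwa [MonoidAlgebra.coeff_mapRingHom, MonoidAlgebra.coeff_mapRingHom] at this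

namespace SchurRing

section Group

variable {G : Type*} [Group G] [Fintype G] (A : SchurRing G)

noncomputable def toSubalgebra : Subalgebra ℤ (MonoidAlgebra ℤ G) :=
  (Submodule.span ℤ (clsum '' A.P)).toSubalgebra
    (clsum_singleton_one (G := G) ▸ Submodule.subset_span ⟨_, A.one_mem, rfl⟩)
    (fun _ _ ha hb => by
      have hle : Submodule.span ℤ (clsum '' A.P) * Submodule.span ℤ (clsum '' A.P) ≤
          Submodule.span ℤ (clsum '' A.P) := by
        rw [Submodule.span_mul_span, Submodule.span_le]
        rintro _ ⟨_, ⟨X, hX, rfl⟩, _, ⟨Y, hY, rfl⟩, rfl⟩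
        exact A.mul_closed X hX Y hY
      exact hle (Submodule.mul_mem_mul ha hb))

theorem clsum_mem_toSubalgebra {X : Set G} (hX : X ∈ A.P) : clsum X ∈ A.toSubalgebra :=
  Submodule.subset_span ⟨X, hX, rfl⟩

theorem coeff_eq_of_mem_toSubalgebra {f : MonoidAlgebra ℤ G} (hf : f ∈ A.toSubalgebra)
    {T : Set G} (hT : T ∈ A.P) {g h : G} (hg : g ∈ T) (hh : h ∈ T) : f.coeff g = f.coeff h := by
  induction hf using Submodule.span_induction with
  | mem _ hx =>
    obtain ⟨Y, hY, rfl⟩ := hx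
    rcases eq_or_ne Y T with rfl | hYT
    · simp [coeff_clsum, hg, hh]
    · have hd := Set.disjoint_right.mp (A.disj Y hY T hT hYT)
      simp [coeff_clsum, hd hg, hd hh]
  | zero => simp
  | add x y _ _ hx hy =>
    simp only [MonoidAlgebra.coeff_add, Finsupp.add_apply, hx, hy]
  | smul c x _ hx =>
    simp only [MonoidAlgebra.coeff_smul, Finsupp.smul_apply, hx]

def IsUnionOfBasicSets (S : Set G) : Prop :=
  ∀ T ∈ A.P, (T ∩ S).Nonempty → T ⊆ S

def MapsBasicToUnions (f : G → G) : Prop :=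
  ∀ X ∈ A.P, A.IsUnionOfBasicSets (f '' X)

variable {A}

theorem isUnionOfBasicSets_of_mem {X : Set G} (hX : X ∈ A.P) : A.IsUnionOfBasicSets X := by
  rintro T hT ⟨g, hgT, hgX⟩
  obtain rfl : T = X := by_contra fun hTX => Set.disjoint_left.mp (A.disj T hT X hX hTX) hgT hgX
  exact le_rfl

theorem IsUnionOfBasicSets.image {S : Set G} (hS : A.IsUnionOfBasicSets S) {f : G → G}
    (hf : A.MapsBasicToUnions f) : A.IsUnionOfBasicSets (f '' S) := by
  rintro T hT ⟨_, hT', x, hxS, rfl⟩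
  obtain ⟨Y, hY, hxY⟩ := A.cover x
  have hYS : Y ⊆ S := hS Y hY ⟨x, hxY, hxS⟩
  exact (hf Y hY T hT ⟨f x, hT', x, hxY, rfl⟩).trans (Set.image_mono hYS)

theorem mapsBasicToUnions_id : A.MapsBasicToUnions id := by
  intro X hX
  rw [Set.image_id]
  exact isUnionOfBasicSets_of_mem hX

theorem MapsBasicToUnions.comp {f g : G → G} (hg : A.MapsBasicToUnions g)
    (hf : A.MapsBasicToUnions f) : A.MapsBasicToUnions (g ∘ f) := by
  intro X hX
  rw [Set.image_comp]
  exact (hf X hX).image hg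

theorem MapsBasicToUnions.iterate {f : G → G} (hf : A.MapsBasicToUnions f) (n : ℕ) :
    A.MapsBasicToUnions f^[n] := by
  induction n with
  | zero => exact mapsBasicToUnions_id
  | succ n ih => rw [Function.iterate_succ]; exact ih.comp hf

theorem image_mem_of_mapsBasicToUnions (σ : Equiv.Perm G) (hσ : A.MapsBasicToUnions σ)
    {X : Set G} (hX : X ∈ A.P) : σ '' X ∈ A.P := by
  have hinv : A.MapsBasicToUnions ⇑(σ⁻¹) := by
    have : σ ^ (orderOf σ - 1) * σ = 1 := by
      rw [pow_sub_one_mul (orderOf_pos σ).ne', pow_orderOf_eq_one]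
    rw [← eq_inv_of_mul_eq_one_left this, Equiv.Perm.coe_pow]
    exact hσ.iterate _
  obtain ⟨x, hx⟩ := A.nonempty_cls X hX
  obtain ⟨T, hT, hxT⟩ := A.cover (σ x)
  have hTX : T ⊆ σ '' X := hσ X hX T hT ⟨σ x, hxT, x, hx, rfl⟩
  have hXT : X ⊆ ⇑(σ⁻¹) '' T := hinv T hT X hX ⟨x, hx, σ x, hxT, σ.symm_apply_apply x⟩
  have hXT' : σ '' X ⊆ T := by
    rintro _ ⟨y, hy, rfl⟩
    obtain ⟨t, ht, rfl⟩ := hXT hy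
    simpa using ht
  exact (hTX.antisymm hXT') ▸ hT

end Group

section CommGroup

variable {G : Type*} [CommGroup G] [Fintype G] {A : SchurRing G}

theorem mapsBasicToUnions_pow_prime {p : ℕ} (hp : p.Prime) (hpG : p.Coprime (Fintype.card G)) :
    A.MapsBasicToUnions (· ^ p) := by
  have := Fact.mk hp
  rintro X hX T hT ⟨g, hgT, hgX⟩ h hhT
  have hconst : (clsum X ^ p).coeff h = (clsum X ^ p).coeff g :=
    A.coeff_eq_of_mem_toSubalgebra (pow_mem (A.clsum_mem_toSubalgebra hX) p) hT hhT hgT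
  by_contra hhX
  have := congrArg (Int.cast : ℤ → ZMod p) hconst
  rw [intCast_coeff_clsum_pow_prime hpG, intCast_coeff_clsum_pow_prime hpG, coeff_clsum,
    coeff_clsum, if_pos hgX, if_neg hhX] at this
  simp at this

theorem mapsBasicToUnions_pow {k : ℕ} (hk : k.Coprime (Fintype.card G)) :
    A.MapsBasicToUnions (· ^ k) := by
  induction k using Nat.recOnMul with
  | zero =>
    have : Subsingleton G :=
      Fintype.card_le_one_iff_subsingleton.mp (Nat.coprime_zero_left _ |>.mp hk).le
    simpa only [Subsingleton.elim _ (id : G → G)] using mapsBasicToUnions_id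
  | one =>
    simp only [pow_one]
    exact mapsBasicToUnions_id
  | prime p hp => exact mapsBasicToUnions_pow_prime hp hk
  | mul a b iha ihb =>
    simp only [pow_mul]
    exact (ihb (Nat.Coprime.coprime_mul_left hk)).comp (iha (Nat.Coprime.coprime_mul_right hk))

end CommGroup

end SchurRing

theorem exists_coprime_zpow_eq_pow {G : Type*} [Group G] [Fintype G] {m : ℤ}
    (hm : m.gcd (Fintype.card G) = 1) :
    ∃ k : ℕ, k.Coprime (Fintype.card G) ∧ ∀ x : G, x ^ m = x ^ k := by
  have hk : (((m % Fintype.card G).toNat : ℕ) : ℤ) = m % Fintype.card G :=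
    Int.toNat_of_nonneg (Int.emod_nonneg m (by exact_mod_cast Fintype.card_ne_zero))
  refine ⟨(m % Fintype.card G).toNat, ?_, fun x => ?_⟩
  · rw [Nat.Coprime, ← Int.gcd_natCast_natCast, hk, Int.gcd_emod, hm]
  · rw [← zpow_natCast, hk, zpow_mod_card]

/-- Schur's first multiplier theorem. -/
theorem stmt7 {G : Type*} [CommGroup G] [Fintype G] (A : SchurRing G) (m : ℤ)
    (hm : Int.gcd m (Fintype.card G) = 1) (X : Set G) (hX : X ∈ A.P) :
    (fun x => x ^ m) '' X ∈ A.P := by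
  obtain ⟨k, hk, hmk⟩ := exists_coprime_zpow_eq_pow hm
  let σ : Equiv.Perm G := powCoprime (by rwa [Nat.card_eq_fintype_card, Nat.coprime_comm])
  have hσ : ⇑σ = (· ^ k) := rfl
  rw [funext hmk, ← hσ]
  exact A.image_mem_of_mapsBasicToUnions σ (hσ ▸ SchurRing.mapsBasicToUnions_pow hk) hX
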